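/- Let n, m ∈ ℕ, let P ∈ ℚ[X] be palindromic of degree 2n and R ∈ ℚ[X] palindromic of degree 2m (i.e. t^{2n}P(1/t) = P(t) and t^{2m}R(1/t) = R(t) for all real t ≠ 0). For real t ∉ {0,1} with P(t) ≠ 0, R(t) ≠ 0, set I(t) := (1+t)/(1−t) + t·P'(t)/P(t) − n and δ̂(t) := t^{−m}R(t). Fix an integer k ≥ 1. For nonzero reals x, y with z := 1/(xy), assume x, y, z ∉ {1} and P and R do not vanish at x, y, z, and define Q_k(x,y) := Σ over the six permutations (u,v,w) of the triple (x,y,z) of (u^k − u^{−k})/δ̂(u) · I(v). Then Q_k(1/x, 1/y) = Q_k(x, y) (note that the inverted triple is (1/x, 1/y, 1/z) and (1/x)(1/y)(1/z) = 1). -/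

import Mathlib

open Polynomial

noncomputable section

/-- `I(t) = (1+t)/(1-t) + t·P'(t)/P(t) - n`. -/
def Ifun (n : ℕ) (P : ℚ[X]) (t : ℝ) : ℝ :=
  (1 + t) / (1 - t) +
    t * Polynomial.aeval t (Polynomial.derivative P) / Polynomial.aeval t P - (n : ℝ)

/-- `δ̂(t) = t^{-m}·R(t)`. -/
def deltaHat (m : ℕ) (R : ℚ[X]) (t : ℝ) : ℝ :=
  t ^ (-(m : ℤ)) * Polynomial.aeval t R

/-- `Q_k(x,y)`: the sum over the six permutations `(u,v,w)` of the triple `(x,y,z)`,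
`z = 1/(xy)`, of `(u^k - u^{-k})/δ̂(u) · I(v)`. -/
def Qfun (n m : ℕ) (P R : ℚ[X]) (k : ℕ) (x y : ℝ) : ℝ :=
  (x ^ (k : ℤ) - x ^ (-(k : ℤ))) / deltaHat m R x * Ifun n P y +
  (x ^ (k : ℤ) - x ^ (-(k : ℤ))) / deltaHat m R x * Ifun n P (x * y)⁻¹ +
  (y ^ (k : ℤ) - y ^ (-(k : ℤ))) / deltaHat m R y * Ifun n P x +
  (y ^ (k : ℤ) - y ^ (-(k : ℤ))) / deltaHat m R y * Ifun n P (x * y)⁻¹ +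
  ((x * y)⁻¹ ^ (k : ℤ) - (x * y)⁻¹ ^ (-(k : ℤ))) / deltaHat m R (x * y)⁻¹ * Ifun n P x +
  ((x * y)⁻¹ ^ (k : ℤ) - (x * y)⁻¹ ^ (-(k : ℤ))) / deltaHat m R (x * y)⁻¹ * Ifun n P y

/-!
Palindromicity makes `δ̂` even and `I` odd under `t ↦ t⁻¹`: differentiating
`P t = t ^ (2n) P t⁻¹` gives `t P'(t)/P(t) + t⁻¹ P'(t⁻¹)/P(t⁻¹) = 2n`, and the Möbius term
`(1 + t)/(1 - t)` changes sign. Since `u ^ k - u ^ (-k)` is odd as well, each of the six summands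
of `Q_k` is invariant.
-/

theorem mul_logDeriv_add_inv_mul_logDeriv_inv {𝕜 : Type*} [NontriviallyNormedField 𝕜]
    {f : 𝕜 → 𝕜} {N : ℕ} (hf : Differentiable 𝕜 f) (hpal : ∀ s ≠ 0, s ^ N * f s⁻¹ = f s)
    {t : 𝕜} (ht : t ≠ 0) (hft : f t ≠ 0) :
    t * logDeriv f t + t⁻¹ * logDeriv f t⁻¹ = N := by
  have hft' : f t⁻¹ ≠ 0 := fun h ↦ hft (by rw [← hpal t ht, h, mul_zero])
  have hnear : (fun s ↦ s ^ N * (f ∘ Inv.inv) s) =ᶠ[nhds t] f :=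
    Filter.eventually_of_mem (isOpen_ne.mem_nhds ht) fun s hs ↦ hpal s hs
  have hlog : logDeriv f t = N / t + logDeriv f t⁻¹ * -(t ^ 2)⁻¹ := by
    rw [← (logDeriv_congr_nhds hnear).eq_of_nhds,
      logDeriv_mul (f := (· ^ N)) t (pow_ne_zero N ht) hft' (differentiableAt_pow N)
      ((hf _).comp t (differentiableAt_inv ht)),
      logDeriv_pow, logDeriv_comp (hf _) (differentiableAt_inv ht), deriv_inv]
  rw [hlog]
  field_simp
  ring

theorem Ifun_inv {n : ℕ} {P : ℚ[X]}
    (hpal : ∀ t : ℝ, t ≠ 0 → t ^ (2 * n) * Polynomial.aeval t⁻¹ P = Polynomial.aeval t P)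
    {t : ℝ} (ht : t ≠ 0) (hP : Polynomial.aeval t P ≠ (0 : ℝ)) :
    Ifun n P t⁻¹ = -Ifun n P t := by
  have hlog := mul_logDeriv_add_inv_mul_logDeriv_inv P.differentiable_aeval hpal ht hP
  simp only [logDeriv_apply, Polynomial.deriv_aeval] at hlog
  have hmoebius : (1 + t⁻¹) / (1 - t⁻¹) = -((1 + t) / (1 - t)) := by
    rw [← mul_div_mul_left _ _ ht, mul_add, mul_sub, mul_one, mul_inv_cancel₀ ht, ← div_neg,
      neg_sub, add_comm]
  unfold Ifun
  push_cast at hlog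
  rw [hmoebius, mul_div_assoc, mul_div_assoc]
  linear_combination hlog

theorem deltaHat_inv {m : ℕ} {R : ℚ[X]}
    (hpal : ∀ t : ℝ, t ≠ 0 → t ^ (2 * m) * Polynomial.aeval t⁻¹ R = Polynomial.aeval t R)
    (t : ℝ) : deltaHat m R t⁻¹ = deltaHat m R t := by
  rcases eq_or_ne t 0 with rfl | ht
  · rw [inv_zero]
  unfold deltaHat
  rw [← hpal t ht, inv_zpow', neg_neg, ← mul_assoc, ← zpow_natCast, ← zpow_add₀ ht]
  congr 2
  push_cast
  ring

theorem inv_zpow_sub_inv_zpow_neg {α : Type*} [DivisionRing α] (a : α) (k : ℤ) :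
    a⁻¹ ^ k - a⁻¹ ^ (-k) = -(a ^ k - a ^ (-k)) := by
  rw [inv_zpow', inv_zpow', neg_neg, neg_sub]

theorem Qk_invariant_under_inversion_general (n m : ℕ) (P R : ℚ[X])
    (hpalP : ∀ t : ℝ, t ≠ 0 →
      t ^ (2 * n) * Polynomial.aeval t⁻¹ P = Polynomial.aeval t P)
    (hpalR : ∀ t : ℝ, t ≠ 0 →
      t ^ (2 * m) * Polynomial.aeval t⁻¹ R = Polynomial.aeval t R)
    (k : ℕ) (x y : ℝ) (hx : x ≠ 0) (hy : y ≠ 0)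
    (hPx : Polynomial.aeval x P ≠ (0 : ℝ)) (hPy : Polynomial.aeval y P ≠ (0 : ℝ))
    (hPz : Polynomial.aeval (x * y)⁻¹ P ≠ (0 : ℝ)) :
    Qfun n m P R k x⁻¹ y⁻¹ = Qfun n m P R k x y := by
  have hz : (x * y)⁻¹ ≠ 0 := inv_ne_zero (mul_ne_zero hx hy)
  unfold Qfun
  rw [← mul_inv]
  simp only [Ifun_inv hpalP hx hPx, Ifun_inv hpalP hy hPy, Ifun_inv hpalP hz hPz,
    deltaHat_inv hpalR, inv_zpow_sub_inv_zpow_neg]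
  ring

/-- If `P` is palindromic of degree `2n` and `R` is palindromic of degree `2m`, then for
`k ≥ 1` and nonzero reals `x, y` with `z = 1/(xy)`, none of `x, y, z` equal to `1` and `P`, `R`
nonvanishing at `x, y, z`, one has `Q_k(1/x, 1/y) = Q_k(x, y)`. -/
theorem Qk_invariant_under_inversion (n m : ℕ) (P R : ℚ[X])
    (hpalP : ∀ t : ℝ, t ≠ 0 →
      t ^ (2 * n) * Polynomial.aeval t⁻¹ P = Polynomial.aeval t P)
    (hpalR : ∀ t : ℝ, t ≠ 0 →
      t ^ (2 * m) * Polynomial.aeval t⁻¹ R = Polynomial.aeval t R)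
    (k : ℕ) (hk : 1 ≤ k) (x y : ℝ) (hx : x ≠ 0) (hy : y ≠ 0)
    (hx1 : x ≠ 1) (hy1 : y ≠ 1) (hz1 : (x * y)⁻¹ ≠ 1)
    (hPx : Polynomial.aeval x P ≠ (0 : ℝ)) (hPy : Polynomial.aeval y P ≠ (0 : ℝ))
    (hPz : Polynomial.aeval (x * y)⁻¹ P ≠ (0 : ℝ))
    (hRx : Polynomial.aeval x R ≠ (0 : ℝ)) (hRy : Polynomial.aeval y R ≠ (0 : ℝ))
    (hRz : Polynomial.aeval (x * y)⁻¹ R ≠ (0 : ℝ)) :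
    Qfun n m P R k x⁻¹ y⁻¹ = Qfun n m P R k x y :=
  Qk_invariant_under_inversion_general n m P R hpalP hpalR k x y hx hy hPx hPy hPz
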